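/- For minimal length left coset representatives u, u' ∈ W^J, the restriction (T_{u^{-1}} · T_{u'})|_J equals δ_{u,u'} · 1 in H_J. -/

import Mathlib

open LaurentPolynomial

noncomputable section
attribute [local instance] Classical.propDecidable

namespace HeckeRes

variable {B : Type} {W : Type} [Group W] {M : CoxeterMatrix B}

/-- The Laurent polynomial ring ℤ[q^{±1}]. -/
abbrev R : Type := LaurentPolynomial ℤ

/-- The variable q. -/
abbrev q : R := LaurentPolynomial.T 1

/-- The inverse variable q⁻¹. -/
abbrev qinv : R := LaurentPolynomial.T (-1)

/-- Bruhat order: u ≤ w iff some reduced word for w has a subword with product u. -/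
def bruhatLE (cs : CoxeterSystem M W) (u w : W) : Prop :=
  ∃ l : List B, cs.IsReduced l ∧ cs.wordProd l = w ∧
    ∃ l' : List B, l'.Sublist l ∧ cs.wordProd l' = u

def bruhatLT (cs : CoxeterSystem M W) (u w : W) : Prop :=
  bruhatLE cs u w ∧ u ≠ w

/-- The standard parabolic subgroup W_J. -/
def WJ (cs : CoxeterSystem M W) (J : Set B) : Subgroup W :=
  Subgroup.closure (cs.simple '' J)

/-- Minimal length representatives of left cosets W/W_J: no right descents in J. -/
def IsMinRep (cs : CoxeterSystem M W) (J : Set B) (u : W) : Prop :=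
  ∀ i ∈ J, cs.length (u * cs.simple i) = cs.length u + 1

/-- Minimal length representatives of right cosets W_J\W: no left descents in J. -/
def IsMinRepR (cs : CoxeterSystem M W) (J : Set B) (u : W) : Prop :=
  ∀ i ∈ J, cs.length (cs.simple i * u) = cs.length u + 1

variable {H : Type} [Ring H] [Algebra R H]

/-- Axioms making a basis of H indexed by W into the standard basis of the Hecke
algebra of (W,S), with quadratic relation T_s² = 1 + (q⁻¹ - q) T_s. -/
structure IsHeckeBasis (cs : CoxeterSystem M W) (Tb : Module.Basis W R H) : Prop where
  T_one : Tb 1 = 1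
  T_mul : ∀ u v : W, cs.length (u * v) = cs.length u + cs.length v →
    Tb u * Tb v = Tb (u * v)
  simple_mul : ∀ (i : B) (w : W), cs.length (cs.simple i * w) < cs.length w →
    Tb (cs.simple i) * Tb w = Tb (cs.simple i * w) + (qinv - q) • Tb w
  mul_simple : ∀ (w : W) (i : B), cs.length (w * cs.simple i) < cs.length w →
    Tb w * Tb (cs.simple i) = Tb (w * cs.simple i) + (qinv - q) • Tb w

/-- The restriction map |_J : H → H, T_w ↦ T_w if w ∈ W_J and 0 otherwise. -/
def resMap (cs : CoxeterSystem M W) (Tb : Module.Basis W R H) (J : Set B) : H →ₗ[R] H :=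
  Tb.constr R (fun w => if w ∈ WJ cs J then Tb w else 0)

/-- The parabolic subalgebra H_J, as the span of {T_w : w ∈ W_J}. -/
def HJ (cs : CoxeterSystem M W) (Tb : Module.Basis W R H) (J : Set B) : Submodule R H :=
  Submodule.span R (Tb '' (WJ cs J : Set W))

/-- A Laurent polynomial lies in ℤ[q]. -/
def IsPoly (p : R) : Prop := ∃ f : Polynomial ℤ, p = f.toLaurent

/-- Axioms for the Kazhdan–Lusztig basis: C_w = Σ_{x ≤ w} h_{x,w}(q) T_x with
h_{w,w} = 1 and h_{x,w} ∈ qℤ[q] for x ≠ w. -/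
structure IsKLBasis (cs : CoxeterSystem M W) (Tb : Module.Basis W R H) (C : W → H) : Prop where
  repr_self : ∀ w : W, Tb.repr (C w) w = 1
  repr_eq_zero : ∀ x w : W, ¬ bruhatLE cs x w → Tb.repr (C w) x = 0
  repr_mem : ∀ x w : W, x ≠ w → ∃ f : Polynomial ℤ,
    Tb.repr (C w) x = q * f.toLaurent

/-- The KL polynomial h_{y,x}. -/
def klPoly (Tb : Module.Basis W R H) (C : W → H) (y x : W) : R := Tb.repr (C x) y

/-- μ(y,x): the coefficient of q in h_{y,x}. -/
def klMu (Tb : Module.Basis W R H) (C : W → H) (y x : W) : ℤ :=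
  (klPoly Tb C y x).coeff 1

open CoxeterSystem List

section StrongExchange

variable (cs : CoxeterSystem M W)

local prefix:100 "s" => cs.simple
local prefix:100 "π" => cs.wordProd
local prefix:100 "ℓ" => cs.length

lemma simple_conj_eq_iff (i : B) (t a : W) :
    s i * t * s i = a ↔ t = s i * a * s i := by
  constructor
  · rintro rfl; simp [mul_assoc, cs.simple_mul_simple_self]
  · rintro rfl; simp [mul_assoc, cs.simple_mul_simple_self]

/-- The Bourbaki function on `W × ℤˣ` associated to a simple reflection. -/
def ePermFun (i : B) : W × ℤˣ → W × ℤˣ :=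
  fun p => (s i * p.1 * s i, if p.1 = s i then -p.2 else p.2)

lemma ePermFun_invol (i : B) : Function.Involutive (ePermFun cs i) := by
  rintro ⟨t, ε⟩
  unfold ePermFun
  dsimp only
  by_cases h : t = s i
  · subst h; simp [mul_assoc, cs.simple_mul_simple_self]
  · have h2 : ¬ (s i * t * s i = s i) := by
      rw [simple_conj_eq_iff]
      simpa [mul_assoc, cs.simple_mul_simple_self] using h
    have h3 : ¬ (t * s i = 1) := fun hh => h (by
      rw [← cs.inv_simple]; exact eq_inv_of_mul_eq_one_left hh)
    simp [h, h2, h3, mul_assoc, cs.simple_mul_simple_self]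

/-- The Bourbaki permutation on `W × ℤˣ` associated to a simple reflection. -/
def ePerm (i : B) : Equiv.Perm (W × ℤˣ) := (ePermFun_invol cs i).toPerm

lemma ePerm_apply (i : B) (p : W × ℤˣ) :
    ePerm cs i p = (s i * p.1 * s i, if p.1 = s i then -p.2 else p.2) := rfl

lemma simple_mul_pow_aux (i j : B) (k : ℕ) :
    s j * (s i * s j) ^ k = ((s i * s j) ^ k)⁻¹ * s j := by
  induction k with
  | zero => simp
  | succ k ih =>
    calc s j * (s i * s j) ^ (k + 1)
        = (s j * (s i * s j) ^ k) * (s i * s j) := by rw [pow_succ, ← mul_assoc]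
      _ = ((s i * s j) ^ k)⁻¹ * (s j * (s i * s j)) := by rw [ih, mul_assoc]
      _ = ((s i * s j) ^ k)⁻¹ * ((s i * s j)⁻¹ * s j) := by
          rw [mul_inv_rev, cs.inv_simple, cs.inv_simple, mul_assoc]
      _ = ((s i * s j) ^ (k + 1))⁻¹ * s j := by
          rw [← mul_assoc, ← mul_inv_rev, ← pow_succ']

lemma ePerm_mul_apply (i j : B) (p : W × ℤˣ) :
    (ePerm cs i * ePerm cs j) p =
      ((s i * s j) * p.1 * ((s i * s j))⁻¹,
        (if p.1 = s j then (-1 : ℤˣ) else 1) *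
          (if p.1 = s j * s i * s j then (-1 : ℤˣ) else 1) * p.2) := by
  rw [Equiv.Perm.mul_apply, ePerm_apply, ePerm_apply]
  have hfst : s i * (s j * p.1 * s j) * s i = (s i * s j) * p.1 * (s i * s j)⁻¹ := by
    rw [mul_inv_rev, cs.inv_simple, cs.inv_simple]; group
  have hcond : (s j * p.1 * s j = s i) ↔ (p.1 = s j * s i * s j) :=
    simple_conj_eq_iff cs j p.1 (s i)
  have hsji : (s j = s i) ↔ (s j * s i = 1) := by
    constructor
    · intro hh; rw [hh, cs.simple_mul_simple_self]
    · intro hh; rw [← cs.inv_simple i]; exact eq_inv_of_mul_eq_one_left hh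
  rw [Prod.ext_iff]
  refine ⟨hfst, ?_⟩
  show (if s j * p.1 * s j = s i then -(if p.1 = s j then -p.2 else p.2)
      else (if p.1 = s j then -p.2 else p.2)) = _
  simp only [hcond]
  by_cases h1 : p.1 = s j <;> by_cases h2 : p.1 = s j * s i * s j
  · simp only [if_pos h1, if_pos h2]; simp
  · simp only [if_pos h1, if_neg h2]; simp
  · simp only [if_neg h1, if_pos h2]; simp
  · simp only [if_neg h1, if_neg h2]; simp

lemma ePerm_mul_pow_apply (i j : B) (m : ℕ) (p : W × ℤˣ) :
    ((ePerm cs i * ePerm cs j) ^ m) p =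
      ((s i * s j) ^ m * p.1 * ((s i * s j) ^ m)⁻¹,
        (∏ r ∈ Finset.range (2 * m),
          (if p.1 = ((s i * s j) ^ r)⁻¹ * s j then (-1 : ℤˣ) else 1)) * p.2) := by
  induction m with
  | zero => simp
  | succ m ih =>
    rw [pow_succ', Equiv.Perm.mul_apply, ih, ePerm_mul_apply]
    have key : ∀ a : W, ((s i * s j) ^ m * p.1 * ((s i * s j) ^ m)⁻¹ = a) ↔
        (p.1 = ((s i * s j) ^ m)⁻¹ * a * (s i * s j) ^ m) := by
      intro a
      constructor
      · intro h; rw [← h]; group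
      · intro h; rw [h]; group
    have hA : (((s i * s j) ^ m * p.1 * ((s i * s j) ^ m)⁻¹ = s j)) ↔
        (p.1 = ((s i * s j) ^ (2 * m))⁻¹ * s j) := by
      rw [key]
      have : ((s i * s j) ^ m)⁻¹ * s j * (s i * s j) ^ m
          = ((s i * s j) ^ (2 * m))⁻¹ * s j := by
        rw [mul_assoc, simple_mul_pow_aux, ← mul_assoc, ← mul_inv_rev, ← pow_add, two_mul]
      rw [this]
    have hB : (((s i * s j) ^ m * p.1 * ((s i * s j) ^ m)⁻¹ = s j * s i * s j)) ↔
        (p.1 = ((s i * s j) ^ (2 * m + 1))⁻¹ * s j) := by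
      rw [key]
      have h1 : s j * s i * s j = (s i * s j)⁻¹ * s j := by
        rw [mul_inv_rev, cs.inv_simple, cs.inv_simple]
      have : ((s i * s j) ^ m)⁻¹ * (s j * s i * s j) * (s i * s j) ^ m
          = ((s i * s j) ^ (2 * m + 1))⁻¹ * s j := by
        rw [h1, mul_assoc (((s i * s j) ^ m)⁻¹), mul_assoc, simple_mul_pow_aux,
          ← mul_assoc, ← mul_assoc, ← mul_inv_rev, ← mul_inv_rev, ← mul_assoc, ← pow_succ,
          ← pow_add]
        congr 3
        omega
      rw [this]
    rw [Prod.ext_iff]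
    constructor
    · show (s i * s j) * ((s i * s j) ^ m * p.1 * ((s i * s j) ^ m)⁻¹) * (s i * s j)⁻¹ = _
      simp only [pow_succ', mul_inv_rev, mul_assoc]
    · show (if _ = s j then (-1:ℤˣ) else 1) * (if _ = s j * s i * s j then (-1:ℤˣ) else 1) * _ = _
      rw [hA, hB]
      have h2m : 2 * (m + 1) = (2 * m + 1) + 1 := by omega
      rw [h2m, Finset.prod_range_succ, Finset.prod_range_succ]
      by_cases hA' : p.1 = ((s i * s j) ^ (2 * m))⁻¹ * s j <;>
        by_cases hB' : p.1 = ((s i * s j) ^ (2 * m + 1))⁻¹ * s j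
      · simp only [if_pos hA', if_pos hB']; simp [mul_comm, mul_assoc, mul_left_comm]
      · simp only [if_pos hA', if_neg hB']; simp [mul_comm, mul_assoc, mul_left_comm]
      · simp only [if_neg hA', if_pos hB']; simp [mul_comm, mul_assoc, mul_left_comm]
      · simp only [if_neg hA', if_neg hB']; simp [mul_comm, mul_assoc, mul_left_comm]

lemma ePerm_liftable : M.IsLiftable (fun i => ePerm cs i) := by
  intro i j
  rcases eq_or_ne (M i j) 0 with h | h
  · rw [h, pow_zero]
  · apply Equiv.ext
    intro p
    rw [ePerm_mul_pow_apply]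
    have hc : (s i * s j) ^ (M i j) = 1 := cs.simple_mul_simple_pow i j
    have hper : ∀ r : ℕ, (s i * s j) ^ (M i j + r) = (s i * s j) ^ r := by
      intro r; rw [pow_add, hc, one_mul]
    have hsnd : (∏ r ∈ Finset.range (2 * M i j),
        (if p.1 = ((s i * s j) ^ r)⁻¹ * s j then (-1 : ℤˣ) else 1)) = 1 := by
      rw [two_mul, Finset.prod_range_add]
      simp only [hper]
      exact Int.units_mul_self _
    rw [hc, hsnd]
    simp

/-- The Bourbaki homomorphism `W →* Perm (W × ℤˣ)`. -/
def ePhi : W →* Equiv.Perm (W × ℤˣ) := cs.lift ⟨fun i => ePerm cs i, ePerm_liftable cs⟩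

lemma ePhi_simple (i : B) : ePhi cs (s i) = ePerm cs i :=
  cs.lift_apply_simple (ePerm_liftable cs) i

lemma ePhi_wordProd (ω : List B) (t : W) (ε : ℤˣ) :
    ePhi cs (π ω)⁻¹ (t, ε) =
      ((π ω)⁻¹ * t * π ω, ε * (-1 : ℤˣ) ^ ((cs.leftInvSeq ω).count t)) := by
  induction ω generalizing t ε with
  | nil => simp
  | cons i ω ih =>
    have hinv : (π (i :: ω))⁻¹ = (π ω)⁻¹ * s i := by
      rw [wordProd_cons, mul_inv_rev, cs.inv_simple]
    rw [hinv, map_mul, Equiv.Perm.mul_apply, ePhi_simple, ePerm_apply]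
    dsimp only
    rw [ih]
    have hlis : cs.leftInvSeq (i :: ω)
        = s i :: List.map (⇑(MulAut.conj (s i))) (cs.leftInvSeq ω) := rfl
    have hcnt : List.count t (List.map (⇑(MulAut.conj (s i))) (cs.leftInvSeq ω))
        = List.count (s i * t * s i) (cs.leftInvSeq ω) := by
      have h0 := List.count_map_of_injective (cs.leftInvSeq ω) (⇑(MulAut.conj (s i)))
        (MulAut.conj (s i)).injective (s i * t * s i)
      have h1 : (MulAut.conj (s i)) (s i * t * s i) = t := by
        simp [MulAut.conj_apply, cs.inv_simple, mul_assoc, cs.simple_mul_simple_self]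
      rw [h1] at h0
      exact h0
    rw [Prod.ext_iff]
    constructor
    · dsimp only
      rw [wordProd_cons]
      group
    · show (if t = s i then -ε else ε) * (-1 : ℤˣ) ^ _ = _
      rw [hlis, List.count_cons, hcnt]
      simp only [beq_iff_eq]
      by_cases h : t = s i
      · rw [if_pos h, if_pos h.symm, pow_succ]
        simp [mul_comm, mul_assoc, mul_left_comm]
      · rw [if_neg h, if_neg (fun hh => h hh.symm)]
        simp [mul_comm, mul_assoc, mul_left_comm]

/-- The sign `η(w, t)`. -/
def eeta (w t : W) : ℤˣ := (ePhi cs w⁻¹ (t, 1)).2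

lemma eeta_eq_count (ω : List B) (t : W) :
    eeta cs (π ω) t = (-1 : ℤˣ) ^ ((cs.leftInvSeq ω).count t) := by
  unfold eeta
  rw [ePhi_wordProd, one_mul]

lemma ePhi_inv_apply (w t : W) (ε : ℤˣ) :
    ePhi cs w⁻¹ (t, ε) = (w⁻¹ * t * w, ε * eeta cs w t) := by
  obtain ⟨ω, rfl⟩ := cs.wordProd_surjective w
  rw [ePhi_wordProd, eeta_eq_count]

lemma eeta_mul (u v t : W) :
    eeta cs (u * v) t = eeta cs u t * eeta cs v (u⁻¹ * t * u) := by
  unfold eeta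
  rw [mul_inv_rev, map_mul, Equiv.Perm.mul_apply, ePhi_inv_apply cs u t 1,
    ePhi_inv_apply cs v (u⁻¹ * t * u) (1 * eeta cs u t)]
  dsimp only
  rw [one_mul]
  rfl

lemma leftInvSeq_append (ω₁ ω₂ : List B) :
    cs.leftInvSeq (ω₁ ++ ω₂)
      = cs.leftInvSeq ω₁ ++ List.map (⇑(MulAut.conj (π ω₁))) (cs.leftInvSeq ω₂) := by
  induction ω₁ with
  | nil => simp
  | cons i ω ih =>
    show s i :: List.map (⇑(MulAut.conj (s i))) (cs.leftInvSeq (ω ++ ω₂)) = _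
    rw [ih, List.map_append, List.map_map]
    have : (⇑(MulAut.conj (s i))) ∘ (⇑(MulAut.conj (π ω))) = ⇑(MulAut.conj (π (i :: ω))) := by
      rw [wordProd_cons, map_mul]
      rfl
    rw [this]
    rfl

lemma count_lis_ris (ρ : List B) (i : B) :
    (cs.leftInvSeq ρ).count (π ρ * s i * (π ρ)⁻¹) = (cs.rightInvSeq ρ).count (s i) := by
  induction ρ with
  | nil => simp
  | cons a ρ ih =>
    have hlis : cs.leftInvSeq (a :: ρ)
        = s a :: List.map (⇑(MulAut.conj (s a))) (cs.leftInvSeq ρ) := rfl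
    have hris : cs.rightInvSeq (a :: ρ)
        = ((π ρ)⁻¹ * s a * π ρ) :: cs.rightInvSeq ρ := rfl
    rw [hlis, hris, List.count_cons, List.count_cons]
    have hw : π (a :: ρ) = s a * π ρ := wordProd_cons cs a ρ
    have hcnt : List.count (π (a :: ρ) * s i * (π (a :: ρ))⁻¹)
        (List.map (⇑(MulAut.conj (s a))) (cs.leftInvSeq ρ))
        = List.count (π ρ * s i * (π ρ)⁻¹) (cs.leftInvSeq ρ) := by
      have h0 := List.count_map_of_injective (cs.leftInvSeq ρ) (⇑(MulAut.conj (s a)))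
        (MulAut.conj (s a)).injective (π ρ * s i * (π ρ)⁻¹)
      have h1 : (MulAut.conj (s a)) (π ρ * s i * (π ρ)⁻¹)
          = π (a :: ρ) * s i * (π (a :: ρ))⁻¹ := by
        rw [hw, MulAut.conj_apply, mul_inv_rev, cs.inv_simple]
        group
      rw [h1] at h0
      exact h0
    rw [hcnt, ih]
    congr 1
    have hcond : (s a = π (a :: ρ) * s i * (π (a :: ρ))⁻¹)
        ↔ ((π ρ)⁻¹ * s a * π ρ = s i) := by
      rw [hw, mul_inv_rev, cs.inv_simple]
      constructor
      · intro h
        have := congrArg (fun z => (π ρ)⁻¹ * (s a * z * (s a * π ρ))) h.symm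
        simpa [mul_assoc, cs.simple_mul_simple_self] using this.symm
      · intro h
        have := congrArg (fun z => s a * ((π ρ) * z * (π ρ)⁻¹) * (s a * 1)) h
        simpa [mul_assoc, cs.simple_mul_simple_self] using this.symm
    by_cases h : s a = π (a :: ρ) * s i * (π (a :: ρ))⁻¹
    · rw [if_pos (by simpa using h), if_pos (by simpa using hcond.mp h)]
    · rw [if_neg (by simpa using h), if_neg (by simpa using (hcond.not.mp h))]

lemma eeta_refl (w : W) (i : B) :
    eeta cs (w * s i * w⁻¹) (w * s i * w⁻¹) = -1 := by
  obtain ⟨ρ, rfl⟩ := cs.wordProd_surjective w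
  set w := π ρ
  set t := w * s i * w⁻¹ with ht
  have hword : π (ρ ++ i :: ρ.reverse) = t := by
    rw [wordProd_append, wordProd_cons, wordProd_reverse, ht, mul_assoc]
  rw [← hword, eeta_eq_count, hword]
  rw [leftInvSeq_append]
  have hlis2 : cs.leftInvSeq (i :: ρ.reverse)
      = s i :: List.map (⇑(MulAut.conj (s i))) (cs.leftInvSeq ρ.reverse) := rfl
  rw [hlis2]
  rw [List.count_append]
  have hmapcons : List.map (⇑(MulAut.conj w)) (s i :: List.map (⇑(MulAut.conj (s i)))
      (cs.leftInvSeq ρ.reverse))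
      = t :: List.map (⇑(MulAut.conj (w * s i))) (cs.leftInvSeq ρ.reverse) := by
    rw [List.map_cons, List.map_map]
    refine congrArg₂ List.cons ?_ (List.map_congr_left fun x _ => ?_)
    · simp [MulAut.conj_apply, ht]
    · simp only [Function.comp_apply, MulAut.conj_apply, mul_inv_rev, cs.inv_simple]
      group
  rw [hmapcons, List.count_cons]
  have hcnt2 : List.count t (List.map (⇑(MulAut.conj (w * s i))) (cs.leftInvSeq ρ.reverse))
      = List.count (s i) (cs.leftInvSeq ρ.reverse) := by
    have h0 := List.count_map_of_injective (cs.leftInvSeq ρ.reverse) (⇑(MulAut.conj (w * s i)))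
      (MulAut.conj (w * s i)).injective (s i)
    have h1 : (MulAut.conj (w * s i)) (s i) = t := by
      rw [MulAut.conj_apply, ht, mul_inv_rev]
      group
    rw [h1] at h0
    exact h0
  rw [hcnt2, cs.leftInvSeq_reverse, List.count_reverse]
  have hcnt3 : List.count (s i) (cs.rightInvSeq ρ) = List.count t (cs.leftInvSeq ρ) :=
    (count_lis_ris cs ρ i).symm
  rw [hcnt3]
  simp only [beq_iff_eq, if_pos rfl, if_true]
  exact Odd.neg_one_pow ⟨List.count t (cs.leftInvSeq ρ), by omega⟩

lemma mem_leftInvSeq_of_descent {ω : List B} (hω : cs.IsReduced ω) {t : W}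
    (ht : cs.IsReflection t) (hlt : ℓ (t * π ω) < ℓ (π ω)) : t ∈ cs.leftInvSeq ω := by
  by_contra hmem
  have h0 : (cs.leftInvSeq ω).count t = 0 := List.count_eq_zero.mpr hmem
  have h1 : eeta cs (π ω) t = 1 := by rw [eeta_eq_count, h0, pow_zero]
  have htt : t * t = 1 := ht.mul_self
  have h2 : eeta cs (π ω) t = eeta cs t t * eeta cs (t * π ω) t := by
    have h3 := eeta_mul cs t (t * π ω) t
    rw [show t * (t * π ω) = π ω by rw [← mul_assoc, htt, one_mul]] at h3
    rw [show t⁻¹ * t * t = t by rw [inv_mul_cancel, one_mul]] at h3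
    exact h3
  have h4 : eeta cs t t = -1 := by
    obtain ⟨v, i, rfl⟩ := ht
    exact eeta_refl cs v i
  have h5 : eeta cs (t * π ω) t = -1 := by
    have := h1.symm.trans h2
    rw [h4] at this
    have h6 := congrArg (fun z => (-1 : ℤˣ) * z) this
    simpa using h6.symm
  obtain ⟨ω₂, hω₂red, hω₂⟩ := cs.exists_reduced_word' (t * π ω)
  have h7 : t ∈ cs.leftInvSeq ω₂ := by
    by_contra hmem2
    have : (cs.leftInvSeq ω₂).count t = 0 := List.count_eq_zero.mpr hmem2
    rw [hω₂, eeta_eq_count, this, pow_zero] at h5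
    exact absurd h5 (by decide)
  have h8 := (cs.isLeftInversion_of_mem_leftInvSeq hω₂red h7).2
  rw [← hω₂] at h8
  rw [show t * (t * π ω) = π ω by rw [← mul_assoc, htt, one_mul]] at h8
  omega

lemma exists_eraseIdx_of_right_descent {ω : List B} (hω : cs.IsReduced ω) {j : B}
    (h : ℓ (π ω * s j) < ℓ (π ω)) :
    ∃ r, r < ω.length ∧ π (ω.eraseIdx r) = π ω * s j := by
  have hmem : s j ∈ cs.rightInvSeq ω := by
    have hrev : cs.IsReduced ω.reverse := (cs.isReduced_reverse_iff ω).mpr hω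
    have hlen : ℓ (s j * π ω.reverse) < ℓ (π ω.reverse) := by
      rw [cs.wordProd_reverse]
      have e1 : s j * (π ω)⁻¹ = (π ω * s j)⁻¹ := by
        rw [mul_inv_rev, cs.inv_simple]
      rw [e1, cs.length_inv, cs.length_inv]
      exact h
    have := mem_leftInvSeq_of_descent cs hrev (cs.isReflection_simple j) hlen
    rw [cs.leftInvSeq_reverse] at this
    exact List.mem_reverse.mp this
  obtain ⟨r, hr, hget⟩ := List.mem_iff_getElem.mp hmem
  rw [cs.length_rightInvSeq] at hr
  refine ⟨r, hr, ?_⟩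
  have := cs.wordProd_mul_getD_rightInvSeq ω r
  rw [List.getD_eq_getElem _ 1 (by rw [cs.length_rightInvSeq]; exact hr), hget] at this
  rw [← this]

lemma exists_reduced_sublist (ω : List B) :
    ∃ ω' : List B, ω'.Sublist ω ∧ π ω' = π ω ∧ cs.IsReduced ω' := by
  suffices H : ∀ n (ω : List B), ω.length ≤ n →
      ∃ ω' : List B, ω'.Sublist ω ∧ π ω' = π ω ∧ cs.IsReduced ω' from
    H ω.length ω le_rfl
  intro n
  induction n with
  | zero =>
    intro ω hω
    rw [Nat.le_zero, List.length_eq_zero_iff] at hω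
    subst hω
    exact ⟨[], List.Sublist.refl _, rfl, by simp [CoxeterSystem.IsReduced]⟩
  | succ n IH =>
    intro ω hω
    by_cases hred : cs.IsReduced ω
    · exact ⟨ω, List.Sublist.refl _, rfl, hred⟩
    · have hne : ω ≠ [] := by rintro rfl; exact hred (by simp [CoxeterSystem.IsReduced])
      have hpos : 0 < ω.length := List.length_pos_iff.mpr hne
      have hPlast : ¬ cs.IsReduced (ω.take (ω.length - 1 + 1)) := by
        rw [show ω.length - 1 + 1 = ω.length by omega]
        rw [List.take_length]
        exact hred
      have hex : ∃ k, ¬ cs.IsReduced (ω.take (k + 1)) := ⟨ω.length - 1, hPlast⟩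
      set k := Nat.find hex with hk
      have hknot : ¬ cs.IsReduced (ω.take (k + 1)) := Nat.find_spec hex
      have hkmin : ∀ m, m < k → cs.IsReduced (ω.take (m + 1)) := by
        intro m hm
        by_contra hc
        exact Nat.find_min hex hm hc
      have hklt : k < ω.length := by
        have : k ≤ ω.length - 1 := Nat.find_le hPlast
        omega
      have hp : cs.IsReduced (ω.take k) := by
        rcases Nat.eq_zero_or_pos k with h0 | h0
        · rw [h0]; simp [CoxeterSystem.IsReduced]
        · have := hkmin (k - 1) (by omega)
          rwa [show k - 1 + 1 = k by omega] at this
      set j := ω[k]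
      have htake : ω.take (k + 1) = ω.take k ++ [j] := by
        have h6 := (List.take_concat_get hklt).symm
        rw [List.concat_eq_append] at h6
        exact h6
      have hlen_take : (ω.take k).length = k := by
        rw [List.length_take]; omega
      have hlp : ℓ (π (ω.take k)) = k := by
        have h5 : ℓ (π (ω.take k)) = (ω.take k).length := hp
        rw [h5, hlen_take]
      have hnotred : ℓ (π (ω.take k) * s j) < ℓ (π (ω.take k)) := by
        have hw1 : π (ω.take (k + 1)) = π (ω.take k) * s j := by
          rw [htake, wordProd_append, wordProd_singleton]
        rcases cs.length_mul_simple (π (ω.take k)) j with hc | hc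
        · exfalso
          apply hknot
          show ℓ (π (ω.take (k+1))) = (ω.take (k+1)).length
          rw [hw1, hc, hlp, List.length_take]
          omega
        · omega
      obtain ⟨r, hrlt, hrerase⟩ := exists_eraseIdx_of_right_descent cs hp hnotred
      set ω' : List B := (ω.take k).eraseIdx r ++ ω.drop (k + 1) with hω'
      have hprod : π ω' = π ω := by
        rw [hω', wordProd_append, hrerase,
          show π (ω.take k) * s j = π (ω.take (k+1)) by
            rw [htake, wordProd_append, wordProd_singleton],
          ← wordProd_append, List.take_append_drop]
      have hsub : ω'.Sublist ω := by
        rw [hω']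
        have h1 : ((ω.take k).eraseIdx r).Sublist (ω.take k) := List.eraseIdx_sublist _ r
        have h2 : (ω.take k).Sublist (ω.take (k + 1)) := by
          rw [htake]; exact List.sublist_append_left _ _
        have h3 : ((ω.take k).eraseIdx r ++ ω.drop (k + 1)).Sublist
            (ω.take (k + 1) ++ ω.drop (k + 1)) :=
          List.Sublist.append (h1.trans h2) (List.Sublist.refl _)
        rw [List.take_append_drop] at h3
        exact h3
      have hlen' : ω'.length ≤ n := by
        have e1 : ((ω.take k).eraseIdx r).length + 1 = (ω.take k).length :=
          List.length_eraseIdx_add_one hrlt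
        rw [hω', List.length_append, List.length_drop]
        omega
      obtain ⟨ω'', h1, h2, h3⟩ := IH ω' hlen'
      exact ⟨ω'', h1.trans hsub, h2.trans hprod, h3⟩

end StrongExchange

section Parabolic

variable (cs : CoxeterSystem M W) (J : Set B)

local prefix:100 "s" => cs.simple
local prefix:100 "π" => cs.wordProd
local prefix:100 "ℓ" => cs.length

lemma simple_mem_WJ {j : B} (hj : j ∈ J) : s j ∈ WJ cs J :=
  Subgroup.subset_closure ⟨j, hj, rfl⟩

lemma wordProd_mem_WJ {l : List B} (hl : ∀ b ∈ l, b ∈ J) : π l ∈ WJ cs J := by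
  induction l with
  | nil => simpa using (WJ cs J).one_mem
  | cons a l ih =>
    rw [wordProd_cons]
    exact mul_mem (simple_mem_WJ cs J (hl a List.mem_cons_self))
      (ih fun b hb => hl b (List.mem_cons_of_mem a hb))

lemma mem_WJ_iff {w : W} :
    w ∈ WJ cs J ↔ ∃ l : List B, (∀ b ∈ l, b ∈ J) ∧ π l = w := by
  constructor
  · intro hw
    refine Subgroup.closure_induction ?_ ?_ ?_ ?_ hw
    · rintro x ⟨jj, hjj, rfl⟩
      exact ⟨[jj], by simpa using hjj, cs.wordProd_singleton jj⟩
    · exact ⟨[], by simp, cs.wordProd_nil⟩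
    · rintro x y hx hy ⟨lx, hlx, rfl⟩ ⟨ly, hly, rfl⟩
      refine ⟨lx ++ ly, ?_, cs.wordProd_append lx ly⟩
      intro b hb
      rcases List.mem_append.mp hb with h | h
      · exact hlx b h
      · exact hly b h
    · rintro x hx ⟨l, hl, rfl⟩
      refine ⟨l.reverse, ?_, cs.wordProd_reverse l⟩
      intro b hb
      exact hl b (List.mem_reverse.mp hb)
  · rintro ⟨l, hl, rfl⟩
    exact wordProd_mem_WJ cs J hl

lemma exists_reduced_J_word {w : W} (hw : w ∈ WJ cs J) :
    ∃ l : List B, (∀ b ∈ l, b ∈ J) ∧ π l = w ∧ cs.IsReduced l := by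
  obtain ⟨l, hl, rfl⟩ := (mem_WJ_iff cs J).mp hw
  obtain ⟨l', hsub, hprod, hred⟩ := exists_reduced_sublist cs l
  exact ⟨l', fun b hb => hl b (hsub.subset hb), hprod, hred⟩

lemma min_additive {x : W} (hx : ∀ z ∈ WJ cs J, ℓ x ≤ ℓ (x * z)) :
    ∀ y ∈ WJ cs J, ℓ (x * y) = ℓ x + ℓ y := by
  suffices H : ∀ n, ∀ y ∈ WJ cs J, ℓ y = n → ℓ (x * y) = ℓ x + ℓ y from
    fun y hy => H (ℓ y) y hy rfl
  intro n
  induction n using Nat.strong_induction_on with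
  | _ n IH =>
    intro y hy hyn
    obtain ⟨m, hmJ, hmprod, hmred⟩ := exists_reduced_J_word cs J hy
    rcases List.eq_nil_or_concat m with rfl | ⟨m', j, rfl⟩
    · simp only [cs.wordProd_nil] at hmprod
      rw [← hmprod]
      simp
    · rw [List.concat_eq_append] at hmprod hmred hmJ
      set y' := π m' with hy'
      have hy'J : y' ∈ WJ cs J :=
        wordProd_mem_WJ cs J fun b hb => hmJ b (List.mem_append_left _ hb)
      have hm'red : cs.IsReduced m' := by
        have := hmred.take m'.length
        rwa [List.take_left] at this
      have hjJ : j ∈ J := hmJ j (List.mem_append_right _ (List.mem_singleton_self j))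
      have hly' : ℓ y' = m'.length := hm'red
      have hly : ℓ y = m'.length + 1 := by
        rw [← hmprod]
        have h5 : ℓ (π (m' ++ [j])) = (m' ++ [j]).length := hmred
        rw [h5, List.length_append, List.length_singleton]
      have hsplit : y' * s j = y := by
        rw [hy', ← cs.wordProd_singleton j, ← cs.wordProd_append, hmprod]
      have hIH : ℓ (x * y') = ℓ x + ℓ y' :=
        IH (ℓ y') (by omega) y' hy'J rfl
      rcases cs.length_mul_simple (x * y') j with hc | hc
      · have h6 : x * y = (x * y') * s j := by rw [mul_assoc, hsplit]
        rw [h6, hc]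
        omega
      · exfalso
        obtain ⟨ρ, hρred, hρ⟩ := cs.exists_reduced_word' x
        have hlx : ℓ x = ρ.length := by rw [hρ]; exact hρred
        have hcat : π (ρ ++ m') = x * y' := by
          rw [cs.wordProd_append, ← hρ, ← hy']
        have hcatred : cs.IsReduced (ρ ++ m') := by
          show ℓ (π (ρ ++ m')) = (ρ ++ m').length
          rw [hcat, hIH, List.length_append]
          omega
        have hdesc : ℓ (π (ρ ++ m') * s j) < ℓ (π (ρ ++ m')) := by
          rw [hcat]
          omega
        obtain ⟨r, hr, hrr⟩ := exists_eraseIdx_of_right_descent cs hcatred hdesc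
        rw [hcat] at hrr
        have hxy : (x * y') * s j = x * y := by rw [mul_assoc, hsplit]
        by_cases hcase : r < ρ.length
        · rw [List.eraseIdx_append_of_lt_length hcase, cs.wordProd_append, ← hy'] at hrr
          -- hrr : π (ρ.eraseIdx r) * y' = x * y' * s j
          have hz : x * ((y' * s j) * y'⁻¹) = π (ρ.eraseIdx r) := by
            have h9 : x * ((y' * s j) * y'⁻¹) = (x * y' * s j) * y'⁻¹ := by group
            rw [h9, ← hrr]
            group
          have hzJ : (y' * s j) * y'⁻¹ ∈ WJ cs J :=
            mul_mem (mul_mem hy'J (simple_mem_WJ cs J hjJ)) (inv_mem hy'J)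
          have hmin := hx _ hzJ
          rw [hz] at hmin
          have hlen1 : ℓ (π (ρ.eraseIdx r)) ≤ (ρ.eraseIdx r).length :=
            cs.length_wordProd_le _
          have hlen2 : (ρ.eraseIdx r).length + 1 = ρ.length :=
            List.length_eraseIdx_add_one hcase
          omega
        · push_neg at hcase
          rw [List.eraseIdx_append_of_length_le hcase, cs.wordProd_append, ← hρ] at hrr
          -- hrr : x * π (m'.eraseIdx (r - ρ.length)) = x * y' * s j
          have hyy : π (m'.eraseIdx (r - ρ.length)) = y := by
            have h7 : x * π (m'.eraseIdx (r - ρ.length)) = x * y := by rw [hrr, hxy]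
            exact mul_left_cancel h7
          have hlen1 : ℓ y ≤ (m'.eraseIdx (r - ρ.length)).length := by
            rw [← hyy]
            exact cs.length_wordProd_le _
          have hrlen : r - ρ.length < m'.length := by
            rw [List.length_append] at hr
            omega
          have hlen2 : (m'.eraseIdx (r - ρ.length)).length + 1 = m'.length :=
            List.length_eraseIdx_add_one hrlen
          omega

lemma exists_min_in_coset (w : W) :
    ∃ x : W, x⁻¹ * w ∈ WJ cs J ∧ ∀ z ∈ WJ cs J, ℓ x ≤ ℓ (x * z) := by
  have hex : ∃ n, ∃ z ∈ WJ cs J, ℓ (w * z) = n := ⟨ℓ w, 1, (WJ cs J).one_mem, by simp⟩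
  obtain ⟨z₀, hz₀, hlen⟩ := Nat.find_spec hex
  refine ⟨w * z₀, ?_, ?_⟩
  · have : (w * z₀)⁻¹ * w = z₀⁻¹ := by group
    rw [this]
    exact inv_mem hz₀
  · intro z hz
    have h1 : ∃ z' ∈ WJ cs J, ℓ (w * z') = ℓ ((w * z₀) * z) :=
      ⟨z₀ * z, mul_mem hz₀ hz, by rw [mul_assoc]⟩
    have h2 := Nat.find_min' hex h1
    rw [hlen]
    exact h2

lemma isMinRep_one : IsMinRep cs J 1 := by
  intro i _
  rw [one_mul, cs.length_simple, cs.length_one]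

lemma minRep_eq_min {u x : W} (hu : IsMinRep cs J u) (hx1 : x⁻¹ * u ∈ WJ cs J)
    (hx2 : ∀ z ∈ WJ cs J, ℓ x ≤ ℓ (x * z)) : u = x := by
  set y := x⁻¹ * u with hy
  have hu_eq : u = x * y := by rw [hy]; group
  by_cases hy1 : y = 1
  · rw [hu_eq, hy1, mul_one]
  · exfalso
    obtain ⟨m, hmJ, hmprod, hmred⟩ := exists_reduced_J_word cs J hx1
    rcases List.eq_nil_or_concat m with rfl | ⟨m', j, rfl⟩
    · exact hy1 (by rw [← hmprod, cs.wordProd_nil])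
    · rw [List.concat_eq_append] at hmprod hmred hmJ
      have hjJ : j ∈ J := hmJ j (List.mem_append_right _ (List.mem_singleton_self j))
      have hm'red : cs.IsReduced m' := by
        have := hmred.take m'.length
        rwa [List.take_left] at this
      have hly : ℓ y = m'.length + 1 := by
        rw [← hmprod]
        have h5 : ℓ (π (m' ++ [j])) = (m' ++ [j]).length := hmred
        rw [h5, List.length_append, List.length_singleton]
      have hysj : y * s j = π m' := by
        rw [← hmprod, cs.wordProd_append, cs.wordProd_singleton, mul_assoc,
          cs.simple_mul_simple_self, mul_one]
      have hlysj : ℓ (y * s j) = m'.length := by rw [hysj]; exact hm'red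
      have hyJ : y ∈ WJ cs J := hx1
      have hysjJ : y * s j ∈ WJ cs J := mul_mem hyJ (simple_mem_WJ cs J hjJ)
      have h1 : ℓ (x * y) = ℓ x + ℓ y := min_additive cs J hx2 y hyJ
      have h2 : ℓ (x * (y * s j)) = ℓ x + ℓ (y * s j) := min_additive cs J hx2 _ hysjJ
      have h3 := hu j hjJ
      rw [hu_eq, mul_assoc] at h3
      rw [h2, hlysj] at h3
      rw [← hu_eq] at h3
      have h4 : ℓ u = ℓ x + ℓ y := by rw [hu_eq, h1]
      omega

lemma isMinRep_additive {u : W} (hu : IsMinRep cs J u) :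
    ∀ y ∈ WJ cs J, ℓ (u * y) = ℓ u + ℓ y := by
  obtain ⟨x, hx1, hx2⟩ := exists_min_in_coset cs J u
  have := minRep_eq_min cs J hu hx1 hx2
  subst this
  exact min_additive cs J hx2

lemma isMinRep_unique {u u' : W} (hu : IsMinRep cs J u) (hu' : IsMinRep cs J u')
    (h : u⁻¹ * u' ∈ WJ cs J) : u = u' := by
  obtain ⟨x, hx1, hx2⟩ := exists_min_in_coset cs J u
  have h1 : u = x := minRep_eq_min cs J hu hx1 hx2
  have hx1' : x⁻¹ * u' ∈ WJ cs J := by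
    have : x⁻¹ * u' = (x⁻¹ * u) * (u⁻¹ * u') := by group
    rw [this]
    exact mul_mem hx1 h
  have h2 : u' = x := minRep_eq_min cs J hu' hx1' hx2
  rw [h1, h2]

lemma isMinRep_eq_one {u : W} (hu : IsMinRep cs J u) (h : u ∈ WJ cs J) : u = 1 := by
  exact isMinRep_unique cs J hu (isMinRep_one cs J)
    (by rw [mul_one]; exact inv_mem h)

lemma exists_minRep_decomp (w : W) :
    ∃ x y : W, IsMinRep cs J x ∧ y ∈ WJ cs J ∧ w = x * y := by
  suffices H : ∀ n, ∀ w : W, ℓ w = n →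
      ∃ x y : W, IsMinRep cs J x ∧ y ∈ WJ cs J ∧ w = x * y from H (ℓ w) w rfl
  intro n
  induction n using Nat.strong_induction_on with
  | _ n IH =>
    intro w hw
    by_cases hmin : IsMinRep cs J w
    · exact ⟨w, 1, hmin, (WJ cs J).one_mem, (mul_one w).symm⟩
    · unfold IsMinRep at hmin
      push_neg at hmin
      obtain ⟨j, hjJ, hj⟩ := hmin
      have hdich := cs.length_mul_simple w j
      have hlt : ℓ (w * s j) < n := by omega
      obtain ⟨x, y, hx, hy, hxy⟩ := IH (ℓ (w * s j)) hlt (w * s j) rfl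
      refine ⟨x, y * s j, hx, mul_mem hy (simple_mem_WJ cs J hjJ), ?_⟩
      have : w = (w * s j) * s j := by
        rw [mul_assoc, cs.simple_mul_simple_self, mul_one]
      rw [this, hxy, mul_assoc]

lemma isMinRep_simple_mul {u : W} (hu : IsMinRep cs J u) (i : B)
    (h : ℓ (s i * u) < ℓ u) : IsMinRep cs J (s i * u) := by
  intro j hj
  rcases cs.length_mul_simple (s i * u) j with h1 | h1
  · exact h1
  · exfalso
    have h2 : u * s j = s i * ((s i * u) * s j) := by
      rw [← mul_assoc, ← mul_assoc, cs.simple_mul_simple_self, one_mul]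
    have h3 : ℓ (u * s j) ≤ 1 + ℓ ((s i * u) * s j) := by
      rw [h2]
      have := cs.length_mul_le (s i) ((s i * u) * s j)
      rwa [cs.length_simple] at this
    have h4 := hu j hj
    omega

end Parabolic

section Hecke

variable (cs : CoxeterSystem M W) (J : Set B)

local prefix:100 "s" => cs.simple
local prefix:100 "ℓ" => cs.length

lemma resMap_basis (Tb : Module.Basis W R H) (w : W) :
    resMap cs Tb J (Tb w) = if w ∈ WJ cs J then Tb w else 0 :=
  Tb.constr_basis R _ w

lemma key_lemma (Tb : Module.Basis W R H) (hT : IsHeckeBasis cs Tb) :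
    ∀ n, ∀ u x y : W, IsMinRep cs J u → IsMinRep cs J x → y ∈ WJ cs J → cs.length u = n →
      resMap cs Tb J (Tb u⁻¹ * Tb (x * y)) = if u = x then Tb y else 0 := by
  intro n
  induction n using Nat.strong_induction_on with
  | _ n IH =>
    intro u x y hu hx hy hun
    by_cases hu1 : u = 1
    · subst hu1
      rw [inv_one, hT.T_one, one_mul, resMap_basis]
      by_cases hx1 : x = 1
      · subst hx1
        rw [one_mul, if_pos hy, if_pos rfl]
      · have hnmem : ¬ (x * y ∈ WJ cs J) := by
          intro hmem
          apply hx1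
          apply isMinRep_eq_one cs J hx
          have : x = (x * y) * y⁻¹ := by group
          rw [this]
          exact mul_mem hmem (inv_mem hy)
        rw [if_neg hnmem, if_neg (fun h => hx1 h.symm)]
    · obtain ⟨i, hi⟩ := cs.exists_leftDescent_of_ne_one hu1
      have hi' : ℓ (s i * u) < ℓ u := hi
      set v := s i * u with hv
      have huv : s i * v = u := by rw [hv, cs.simple_mul_simple_cancel_left]
      have hlv : ℓ v + 1 = ℓ u := by
        rcases cs.length_simple_mul u i with h | h
        · rw [← hv] at h; omega
        · rw [← hv] at h; exact h
      have hvmin : IsMinRep cs J v := isMinRep_simple_mul cs J hu i hi'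
      have hTu : Tb u⁻¹ = Tb v⁻¹ * Tb (s i) := by
        have h1 : v⁻¹ * s i = u⁻¹ := by
          rw [hv, mul_inv_rev, cs.inv_simple, mul_assoc, cs.simple_mul_simple_self, mul_one]
        have h2 : ℓ (v⁻¹ * s i) = ℓ v⁻¹ + ℓ (s i) := by
          rw [h1, cs.length_inv, cs.length_inv, cs.length_simple]
          omega
        rw [hT.T_mul v⁻¹ (s i) h2, h1]
      set w := x * y with hw
      have hlw : ℓ w = ℓ x + ℓ y := by
        rw [hw]
        exact isMinRep_additive cs J hx y hy
      rw [hTu, mul_assoc]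
      -- common implication: if the min rep of s i * w is v, then u = x
      have himp : ∀ x₁ y₁ : W, IsMinRep cs J x₁ → y₁ ∈ WJ cs J → s i * w = x₁ * y₁ →
          v = x₁ → u = x := by
        intro x₁ y₁ hx₁ hy₁ hxy₁ hvx
        subst hvx
        have hwu : w = u * y₁ := by
          rw [← huv, mul_assoc, ← hxy₁, cs.simple_mul_simple_cancel_left]
        have e : x * y = u * y₁ := by rw [← hw, hwu]
        have e2 : u⁻¹ * x = y₁ * y⁻¹ := by
          have h9 : u⁻¹ * (x * y) * y⁻¹ = u⁻¹ * (u * y₁) * y⁻¹ := by rw [e]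
          calc u⁻¹ * x = u⁻¹ * (x * y) * y⁻¹ := by group
            _ = u⁻¹ * (u * y₁) * y⁻¹ := h9
            _ = y₁ * y⁻¹ := by group
        apply isMinRep_unique cs J hu hx
        rw [e2]
        exact mul_mem hy₁ (inv_mem hy)
      rcases cs.length_simple_mul w i with hsw | hsw
      · -- ℓ (s i * w) = ℓ w + 1
        have hTm : Tb (s i) * Tb w = Tb (s i * w) := by
          apply hT.T_mul
          rw [hsw, cs.length_simple]
          omega
        rw [hTm]
        obtain ⟨x₁, y₁, hx₁, hy₁, hxy₁⟩ := exists_minRep_decomp cs J (s i * w)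
        rw [hxy₁, IH (ℓ v) (by omega) v x₁ y₁ hvmin hx₁ hy₁ rfl]
        have hux : u ≠ x := by
          intro h
          have h1 : s i * w = v * y := by
            rw [hw, ← h, ← mul_assoc, ← hv]
          have h2 : ℓ (s i * w) ≤ ℓ v + ℓ y := by
            rw [h1]
            exact cs.length_mul_le v y
          have hlen : ℓ u = ℓ x := by rw [h]
          omega
        rw [if_neg (fun h => hux (himp x₁ y₁ hx₁ hy₁ hxy₁ h)), if_neg hux]
      · -- ℓ (s i * w) + 1 = ℓ w
        have hTm := hT.simple_mul i w (by omega)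
        rw [hTm, mul_add, mul_smul_comm, map_add, LinearMap.map_smul]
        have hterm2 : resMap cs Tb J (Tb v⁻¹ * Tb w) = 0 := by
          rw [hw, IH (ℓ v) (by omega) v x y hvmin hx hy rfl]
          rw [if_neg ?_]
          intro h
          have h1 : s i * w = u * y := by
            rw [hw, ← h, ← mul_assoc, huv]
          have h2 : ℓ (s i * w) = ℓ u + ℓ y := by
            rw [h1]
            exact isMinRep_additive cs J hu y hy
          have hlen : ℓ v = ℓ x := by rw [h]
          omega
        rw [hterm2, smul_zero, add_zero]
        obtain ⟨x₁, y₁, hx₁, hy₁, hxy₁⟩ := exists_minRep_decomp cs J (s i * w)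
        rw [hxy₁, IH (ℓ v) (by omega) v x₁ y₁ hvmin hx₁ hy₁ rfl]
        by_cases hux : u = x
        · -- v = x₁ and y₁ = y
          have h1 : s i * w = v * y := by
            rw [hw, ← hux, ← mul_assoc, ← hv]
          have e : v * y = x₁ * y₁ := by rw [← h1, hxy₁]
          have e2 : v⁻¹ * x₁ = y * y₁⁻¹ := by
            have h9 : v⁻¹ * (v * y) * y₁⁻¹ = v⁻¹ * (x₁ * y₁) * y₁⁻¹ := by rw [e]
            calc v⁻¹ * x₁ = v⁻¹ * (x₁ * y₁) * y₁⁻¹ := by group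
              _ = v⁻¹ * (v * y) * y₁⁻¹ := h9.symm
              _ = y * y₁⁻¹ := by group
          have h3 : v = x₁ := isMinRep_unique cs J hvmin hx₁ (by
            rw [e2]; exact mul_mem hy (inv_mem hy₁))
          have h4 : y₁ = y := by
            apply mul_left_cancel (a := v)
            rw [e, h3]
          rw [if_pos h3, if_pos hux, h4]
        · rw [if_neg (fun h => hux (himp x₁ y₁ hx₁ hy₁ hxy₁ h)), if_neg hux]

end Hecke

/-- for minimal length coset representatives u, u' ∈ W^J,
(T_{u⁻¹} T_{u'})|_J = δ_{u,u'}. -/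
theorem resMap_T_orthogonality (cs : CoxeterSystem M W) (Tb : Module.Basis W R H)
    (hT : IsHeckeBasis cs Tb) (J : Set B) (u u' : W)
    (hu : IsMinRep cs J u) (hu' : IsMinRep cs J u') :
    resMap cs Tb J (Tb u⁻¹ * Tb u') = if u = u' then 1 else 0 := by
  have := key_lemma cs J Tb hT (cs.length u) u u' 1 hu hu' (WJ cs J).one_mem rfl
  rw [mul_one] at this
  rw [this, hT.T_one]

end HeckeRes
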